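/- arXiv:2201.10631 — 3 statements merged into one kernel-verified Lean document; each statement's English description precedes it below -/
import Mathlib

section
/- Let n ≥ 2 be even and let k = 1. For every similarity matrix S ∈ [0,1]^{n×n}, there exist a partition of [n] into two subsets A₁, A₂ each of size n/2 and an assignment M with loads 1 respecting (A₁, A₂) such that the similarity of M is at least (2/3)·Opt_S, where Opt_S is the maximum similarity over all assignments with loads 1. -/
/-!
Take an optimal assignment; it is a fixed-point-free permutation `σ`. On every cycle of `σ` mark
the edge `x ↦ σ x` of least similarity. Even cycles are kept and coloured alternately. An odd
cycle has length at least three, so its marked edge carries at most a third of its weight; since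
`n` is even, the odd cycles come in pairs, and for each pair the two marked edges `x ↦ σ x`,
`y ↦ σ y` are replaced by `x ↦ σ y`, `y ↦ σ x`, which fuses the two cycles into one even cycle.
The resulting permutation `τ` moves every point to the other colour class, so the colour classes
have size `n / 2` each, and `τ` keeps at least two thirds of the optimal similarity.
-/

def IsAssignment (n k : ℕ) (M : Finset (Fin n × Fin n)) : Prop :=
  (∀ i : Fin n, (M.filter fun p => p.1 = i).card = k) ∧
  (∀ j : Fin n, (M.filter fun p => p.2 = j).card = k) ∧
  ∀ i : Fin n, (i, i) ∉ M

noncomputable def simVal {n : ℕ} (S : Fin n → Fin n → ℝ) (M : Finset (Fin n × Fin n)) : ℝ :=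
  ∑ p ∈ M, S p.1 p.2

noncomputable def OptSim (n k : ℕ) (S : Fin n → Fin n → ℝ) : ℝ :=
  sSup {x : ℝ | ∃ M : Finset (Fin n × Fin n), IsAssignment n k M ∧ simVal S M = x}

def Respects {n : ℕ} (A₁ A₂ : Finset (Fin n)) (M : Finset (Fin n × Fin n)) : Prop :=
  ∀ p ∈ M, (p.1 ∈ A₁ ∧ p.2 ∈ A₂) ∨ (p.1 ∈ A₂ ∧ p.2 ∈ A₁)

open Finset Equiv

theorem Finset.exists_perm_flipping_of_even_card {α : Type*} [DecidableEq α] (K : Finset α)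
    (hK : Even #K) :
    ∃ (ρ : Perm α) (φ : α → Bool), (∀ z ∉ K, ρ z = z) ∧ ∀ x ∈ K, ρ x ∈ K ∧ φ (ρ x) ≠ φ x := by
  obtain ⟨m, hm⟩ := hK
  induction m generalizing K with
  | zero =>
    have hK : K = ∅ := card_eq_zero.mp hm
    exact ⟨1, fun _ => false, fun _ _ => rfl, by simp [hK]⟩
  | succ m ih =>
    obtain ⟨a, ha⟩ : K.Nonempty := card_pos.mp (by omega)
    obtain ⟨b, hb⟩ : (K.erase a).Nonempty := card_pos.mp (by rw [card_erase_of_mem ha]; omega)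
    have hba : b ≠ a := ne_of_mem_erase hb
    obtain ⟨ρ, φ, hρ_out, hρ_in⟩ := ih ((K.erase a).erase b)
      (by rw [card_erase_of_mem hb, card_erase_of_mem ha]; omega)
    have hρa : ρ a = a := hρ_out a (by simp)
    have hρb : ρ b = b := hρ_out b (by simp)
    refine ⟨swap a b * ρ, fun z => if z = b then false else if z = a then true else φ z, ?_, ?_⟩
    · intro z hz
      have hza : z ≠ a := by rintro rfl; exact hz ha
      have hzb : z ≠ b := by rintro rfl; exact hz (mem_of_mem_erase hb)
      simp [hρ_out z (by simp [hz]), swap_apply_of_ne_of_ne hza hzb]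
    · intro x hx
      by_cases hxa : x = a
      · subst hxa; simp [hρa, mem_of_mem_erase hb, hba.symm]
      by_cases hxb : x = b
      · subst hxb; simp [hρb, ha, hba.symm]
      obtain ⟨hρx, hφ⟩ := hρ_in x (by simp [hx, hxa, hxb])
      simp only [mem_erase] at hρx
      simp [swap_apply_of_ne_of_ne hρx.2.1 hρx.1, hρx.2.2, hρx.1, hρx.2.1, hxa, hxb, hφ]

/-- A choice of one cut point on each cycle of `σ`, together with the number `dist z` of
`σ`-steps from `z` forward to the cut point of its cycle. The cycle through a cut point `x`
has length `dist (σ x) + 1`. -/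
structure Equiv.Perm.CycleCut {α : Type*} (σ : Perm α) where
  cut : α → α
  dist : α → ℕ
  cut_apply : ∀ z, cut (σ z) = cut z
  dist_eq_zero_iff : ∀ z, dist z = 0 ↔ cut z = z
  dist_eq_dist_apply_add_one : ∀ z, cut z ≠ z → dist z = dist (σ z) + 1

namespace Equiv.Perm.CycleCut
variable {α : Type*} [Fintype α] [DecidableEq α] {σ : Perm α}

theorem exists_forall_cut_le (σ : Perm α) (w : α → ℝ) :
    ∃ m : CycleCut σ, ∀ z, w (m.cut z) ≤ w z := by
  choose g hg_mem hg_min using fun s : Finset α => s.exists_min_image w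
  let orbit (z : α) : Finset α := {y | σ.SameCycle z y}
  have mem_orbit (z : α) : z ∈ orbit z := by simp [orbit, Perm.SameCycle.refl]
  let r (z : α) : α := g (orbit z) ⟨z, mem_orbit z⟩
  have hr_same (z : α) : σ.SameCycle z (r z) := by simpa [orbit] using hg_mem (orbit z) _
  have hr_apply (z : α) : r (σ z) = r z := by
    have : orbit (σ z) = orbit z := by ext y; simp [orbit, Perm.sameCycle_apply_left]
    simp only [r, this]
  have hr_pow (z : α) : ∃ k : ℕ, (σ ^ k) z = r z := (hr_same z).exists_nat_pow_eq
  let d (z : α) : ℕ := Nat.find (hr_pow z)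
  have hd_zero (z : α) : d z = 0 ↔ r z = z := by
    rw [show d z = Nat.find (hr_pow z) from rfl, Nat.find_eq_zero, pow_zero, Perm.one_apply,
      eq_comm]
  refine ⟨⟨r, d, hr_apply, hd_zero, fun z hz => le_antisymm ?_ ?_⟩, fun z => ?_⟩
  · refine Nat.find_le ?_
    rw [pow_succ, Perm.mul_apply, Nat.find_spec (hr_pow (σ z)), hr_apply]
  · obtain ⟨k, hk⟩ := Nat.exists_eq_add_one_of_ne_zero (mt (hd_zero z).mp hz)
    have hk' : (σ ^ k) (σ z) = r (σ z) := by
      rw [hr_apply, ← Perm.mul_apply, ← pow_succ, ← hk]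
      exact Nat.find_spec (hr_pow z)
    rw [hk]
    exact Nat.succ_le_succ (Nat.find_min' _ hk')
  · exact hg_min _ _ z (mem_orbit z)

def oddCuts (m : CycleCut σ) : Finset α := {x | m.cut x = x ∧ Even (m.dist (σ x))}

theorem card_eq_sum_dist_add_one (m : CycleCut σ) :
    Fintype.card α = ∑ x with m.cut x = x, (m.dist (σ x) + 1) := by
  have hsum : ∑ z, m.dist z = ∑ z, m.dist (σ z) := (Equiv.sum_comp σ m.dist).symm
  rw [← sum_filter_add_sum_filter_not univ (fun z => m.cut z = z),
    ← sum_filter_add_sum_filter_not univ (fun z => m.cut z = z) (fun z => m.dist (σ z)),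
    sum_congr rfl fun z hz => (m.dist_eq_zero_iff z).mpr (mem_filter.mp hz).2,
    sum_congr rfl fun z hz => m.dist_eq_dist_apply_add_one z (mem_filter.mp hz).2,
    sum_add_distrib] at hsum
  rw [sum_add_distrib, ← card_eq_sum_ones, ← card_univ,
    ← card_filter_add_card_filter_not (s := univ) (fun z => m.cut z = z), card_eq_sum_ones]
  simp only [sum_const_zero, zero_add, ← card_eq_sum_ones, ne_eq] at hsum ⊢
  omega

theorem even_card_oddCuts (m : CycleCut σ) (h : Even (Fintype.card α)) : Even #m.oddCuts := by
  rw [m.card_eq_sum_dist_add_one, even_sum_iff_even_card_odd, filter_filter] at h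
  simpa [oddCuts, Nat.odd_add_one] using h


theorem three_mul_le_sum_fiber (m : CycleCut σ) (hσ : ∀ z, σ z ≠ z) {w : α → ℝ}
    (hw : ∀ z, 0 ≤ w z) (hmin : ∀ z, w (m.cut z) ≤ w z) {x : α} (hx : x ∈ m.oddCuts) :
    3 * w x ≤ ∑ z with m.cut z = x, w z := by
  obtain ⟨hcut, hodd⟩ := (mem_filter.mp hx).2
  have hcut₁ : m.cut (σ x) = x := (m.cut_apply x).trans hcut
  have hcut₂ : m.cut (σ (σ x)) = x := (m.cut_apply _).trans hcut₁
  -- a cycle of length two would have `dist (σ x) = 1`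
  have h₂ : σ (σ x) ≠ x := by
    intro h
    have := m.dist_eq_dist_apply_add_one (σ x) (hcut₁.trans_ne (hσ x).symm)
    rw [h, (m.dist_eq_zero_iff x).mpr hcut] at this
    rw [this] at hodd
    exact Nat.not_even_one hodd
  have hsub : {x, σ x, σ (σ x)} ⊆ ({z | m.cut z = x} : Finset α) := by
    intro z hz
    simp only [mem_insert, mem_singleton] at hz
    rcases hz with rfl | rfl | rfl <;> simp [hcut, hcut₁, hcut₂]
  calc 3 * w x ≤ w x + w (σ x) + w (σ (σ x)) := by
        linarith [hcut₁ ▸ hmin (σ x), hcut₂ ▸ hmin (σ (σ x))]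
    _ = ∑ z ∈ {x, σ x, σ (σ x)}, w z := by
        rw [sum_insert (by simp [(hσ x).symm, h₂.symm]),
          sum_insert (by simpa using (hσ (σ x)).symm), sum_singleton, add_assoc]
    _ ≤ ∑ z with m.cut z = x, w z := sum_le_sum_of_subset_of_nonneg hsub fun z _ _ => hw z

theorem three_mul_sum_oddCuts_le (m : CycleCut σ) (hσ : ∀ z, σ z ≠ z) {w : α → ℝ}
    (hw : ∀ z, 0 ≤ w z) (hmin : ∀ z, w (m.cut z) ≤ w z) :
    3 * ∑ x ∈ m.oddCuts, w x ≤ ∑ z, w z :=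
  calc 3 * ∑ x ∈ m.oddCuts, w x = ∑ x ∈ m.oddCuts, 3 * w x := mul_sum _ _ _
    _ ≤ ∑ x ∈ m.oddCuts, ∑ z with m.cut z = x, w z :=
        sum_le_sum fun _ hx => m.three_mul_le_sum_fiber hσ hw hmin hx
    _ ≤ ∑ x, ∑ z with m.cut z = x, w z :=
        sum_le_sum_of_subset_of_nonneg (subset_univ _) fun _ _ _ => sum_nonneg fun z _ => hw z
    _ = ∑ z, w z := sum_fiberwise univ m.cut w

def color (m : CycleCut σ) (φ : α → Bool) (z : α) : Bool :=
  xor (φ (m.cut z)) (decide (Even (m.dist z)))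

theorem color_mul_apply_ne (m : CycleCut σ) {ρ : Perm α} {φ : α → Bool}
    (hρ_out : ∀ z ∉ m.oddCuts, ρ z = z)
    (hρ_in : ∀ x ∈ m.oddCuts, ρ x ∈ m.oddCuts ∧ φ (ρ x) ≠ φ x) (z : α) :
    m.color φ ((σ * ρ) z) ≠ m.color φ z := by
  by_cases hz : z ∈ m.oddCuts
  · obtain ⟨hρz, hφ⟩ := hρ_in z hz
    obtain ⟨hcut, -⟩ := (mem_filter.mp hz).2
    obtain ⟨hcut', hodd'⟩ := (mem_filter.mp hρz).2
    simpa [color, m.cut_apply, hcut', hodd', hcut, (m.dist_eq_zero_iff z).mpr hcut] using hφ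
  rw [Perm.mul_apply, hρ_out z hz]
  by_cases hcut : m.cut z = z
  · have hodd : ¬Even (m.dist (σ z)) := fun h => hz (mem_filter.mpr ⟨mem_univ _, hcut, h⟩)
    simp [color, m.cut_apply, (m.dist_eq_zero_iff z).mpr hcut, hodd]
  · simp [color, m.cut_apply, m.dist_eq_dist_apply_add_one z hcut, Nat.even_add_one,
      -Nat.not_even_iff_odd]

end Equiv.Perm.CycleCut

theorem card_filter_true_eq_card_filter_false {α : Type*} [Fintype α] {τ : Perm α} {c : α → Bool}
    (hc : ∀ z, c (τ z) ≠ c z) : #{z | c z = true} = #{z | c z = false} := by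
  refine card_nbij' τ τ.symm (fun z hz => ?_) (fun z hz => ?_) (fun z _ => by simp)
    (fun z _ => by simp)
  · simpa [(mem_filter.mp hz).2] using hc z
  · have := hc (τ.symm z)
    rw [Equiv.apply_symm_apply, (mem_filter.mp hz).2] at this
    simpa using this.symm

theorem exists_perm_alternating_two_thirds_le {α : Type*} [Fintype α] [DecidableEq α]
    (σ : Perm α) (hσ : ∀ z, σ z ≠ z)
    (hα : Even (Fintype.card α)) (S : α → α → ℝ) (hS : ∀ i j, 0 ≤ S i j) :
    ∃ (τ : Perm α) (c : α → Bool),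
      (∀ z, c (τ z) ≠ c z) ∧ 2 / 3 * ∑ z, S z (σ z) ≤ ∑ z, S z (τ z) := by
  obtain ⟨m, hmin⟩ := Perm.CycleCut.exists_forall_cut_le σ fun z => S z (σ z)
  obtain ⟨ρ, φ, hρ_out, hρ_in⟩ := m.oddCuts.exists_perm_flipping_of_even_card
    (m.even_card_oddCuts hα)
  refine ⟨σ * ρ, m.color φ, m.color_mul_apply_ne hρ_out hρ_in, ?_⟩
  have hcut := m.three_mul_sum_oddCuts_le hσ (fun z => hS z (σ z)) hmin
  have hkeep : ∑ z with z ∉ m.oddCuts, S z (σ z) ≤ ∑ z, S z ((σ * ρ) z) := by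
    have hfix : ∑ z with z ∉ m.oddCuts, S z ((σ * ρ) z) = ∑ z with z ∉ m.oddCuts, S z (σ z) :=
      sum_congr rfl fun z hz => by rw [Perm.mul_apply, hρ_out z (mem_filter.mp hz).2]
    rw [← sum_filter_add_sum_filter_not univ (· ∈ m.oddCuts) fun z => S z ((σ * ρ) z), hfix]
    exact le_add_of_nonneg_left (sum_nonneg fun z _ => hS _ _)
  have hsplit := sum_filter_add_sum_filter_not univ (· ∈ m.oddCuts) fun z => S z (σ z)
  rw [filter_mem_eq_inter, univ_inter] at hsplit
  linarith

def permGraph {α : Type*} [Fintype α] [DecidableEq α] (τ : Perm α) : Finset (α × α) :=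
  univ.image fun i => (i, τ i)

theorem mem_permGraph {α : Type*} [Fintype α] [DecidableEq α] {τ : Perm α} {a b : α} :
    (a, b) ∈ permGraph τ ↔ τ a = b := by
  simp [permGraph]

section Assignments
variable {n : ℕ}

theorem simVal_permGraph (S : Fin n → Fin n → ℝ) (τ : Perm (Fin n)) :
    simVal S (permGraph τ) = ∑ i, S i (τ i) :=
  sum_image fun _ _ _ _ h => congrArg Prod.fst h

theorem isAssignment_permGraph {τ : Perm (Fin n)} (hτ : ∀ i, τ i ≠ i) :
    IsAssignment n 1 (permGraph τ) := by
  refine ⟨fun i => card_eq_one.mpr ⟨(i, τ i), ?_⟩, fun j => card_eq_one.mpr ⟨(τ.symm j, j), ?_⟩,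
    fun i hi => ?_⟩
  · ext ⟨a, b⟩
    simp only [mem_filter, mem_permGraph, mem_singleton, Prod.mk.injEq]
    constructor <;> rintro ⟨h, rfl⟩ <;> simp [h]
  · ext ⟨a, b⟩
    simp only [mem_filter, mem_permGraph, mem_singleton, Prod.mk.injEq, ← τ.eq_symm_apply]
    constructor <;> rintro ⟨h, rfl⟩ <;> simp [h]
  · exact hτ i (mem_permGraph.mp hi)

theorem IsAssignment.exists_perm_eq_permGraph {M : Finset (Fin n × Fin n)}
    (hM : IsAssignment n 1 M) : ∃ σ : Perm (Fin n), (∀ i, σ i ≠ i) ∧ M = permGraph σ := by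
  obtain ⟨hrow, hcol, hdiag⟩ := hM
  have hsucc (i : Fin n) : ∃ j, ∀ j', (i, j') ∈ M ↔ j' = j := by
    obtain ⟨⟨a, b⟩, hp⟩ := card_eq_one.mp (hrow i)
    have hmem (q : Fin n × Fin n) : q ∈ M ∧ q.1 = i ↔ q = (a, b) := by
      simpa using Finset.ext_iff.mp hp q
    obtain rfl : a = i := ((hmem _).mpr rfl).2
    exact ⟨b, fun j' => by simpa using hmem (a, j')⟩
  choose f hf using hsucc
  have hinj : Function.Injective f := fun a b hab =>
    congrArg Prod.fst (card_le_one.mp (hcol (f a)).le (a, f a) (by simp [hf])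
      (b, f b) (by simp [hf, hab]))
  refine ⟨Equiv.ofBijective f (Finite.injective_iff_bijective.mp hinj),
    fun i h => hdiag i ((hf i i).mpr h.symm), ?_⟩
  ext ⟨i, j⟩
  simp [mem_permGraph, hf, eq_comm]

theorem exists_isAssignment_simVal_eq_optSim {k : ℕ} (S : Fin n → Fin n → ℝ)
    (h : ∃ M, IsAssignment n k M) : ∃ M, IsAssignment n k M ∧ simVal S M = OptSim n k S := by
  obtain ⟨M, hM⟩ := h
  have hfin : {x | ∃ M, IsAssignment n k M ∧ simVal S M = x}.Finite :=
    (Set.finite_range (simVal S)).subset fun _ ⟨M, _, hM⟩ => ⟨M, hM⟩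
  exact Set.Nonempty.csSup_mem (s := {x | ∃ M, IsAssignment n k M ∧ simVal S M = x})
    ⟨_, M, hM, rfl⟩ hfin

theorem exists_perm_fin_apply_ne (hn : 2 ≤ n) : ∃ σ : Perm (Fin n), ∀ i, σ i ≠ i := by
  obtain ⟨m, rfl⟩ := Nat.exists_eq_add_of_le' hn
  exact ⟨finRotate (m + 2), fun i => Perm.mem_support.mp (by simp [support_finRotate])⟩

end Assignments

theorem stmt1 (n : ℕ) (hn : 2 ≤ n) (heven : Even n)
    (S : Fin n → Fin n → ℝ) (hS : ∀ i j, 0 ≤ S i j ∧ S i j ≤ 1) :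
    ∃ (A₁ A₂ : Finset (Fin n)) (M : Finset (Fin n × Fin n)),
      Disjoint A₁ A₂ ∧ A₁ ∪ A₂ = Finset.univ ∧
      A₁.card = n / 2 ∧ A₂.card = n / 2 ∧
      IsAssignment n 1 M ∧ Respects A₁ A₂ M ∧
      (2 / 3 : ℝ) * OptSim n 1 S ≤ simVal S M := by
  obtain ⟨σ₀, hσ₀⟩ := exists_perm_fin_apply_ne hn
  obtain ⟨M₀, hM₀, hopt⟩ :=
    exists_isAssignment_simVal_eq_optSim S ⟨_, isAssignment_permGraph hσ₀⟩
  obtain ⟨σ, hσ, rfl⟩ := hM₀.exists_perm_eq_permGraph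
  obtain ⟨τ, c, hc, hτ⟩ := exists_perm_alternating_two_thirds_le σ hσ
    (by rwa [Fintype.card_fin]) S fun i j => (hS i j).1
  have hcard := card_filter_true_eq_card_filter_false hc
  have htot := card_filter_add_card_filter_not (s := univ) (fun i => c i = true)
  simp only [Bool.not_eq_true, card_univ, Fintype.card_fin] at htot
  refine ⟨({i | c i = true} : Finset _), ({i | c i = false} : Finset _), permGraph τ,
    disjoint_filter.mpr fun i _ h => by simp [h], ?_, by omega, by omega,
    isAssignment_permGraph fun i h => hc i (congrArg c h), ?_, ?_⟩
  · ext i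
    cases c i <;> simp
  · intro p hp
    obtain ⟨i, -, rfl⟩ := mem_image.mp hp
    have hi := hc i
    cases hci : c i <;> cases hcτ : c (τ i) <;> simp_all
  · rwa [← hopt, simVal_permGraph, simVal_permGraph]
end

section
/- Let ℓ ≥ 2 be an integer and let w : Z_ℓ → ℝ be nonnegative, where w(i) is interpreted as the weight of the cycle edge from i to i+1 (mod ℓ). Then there exists a function f : Z_ℓ → {0,1} such that the two level sets of f have sizes ⌈ℓ/2⌉ and ⌊ℓ/2⌋, and Σ_{i ∈ Z_ℓ : f(i) ≠ f(i+1)} w(i) ≥ (2/3)·Σ_{i ∈ Z_ℓ} w(i). -/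
/-!
Cut the cycle just after an edge `j` of minimum weight and colour the vertices alternately along
the resulting path, starting at `j + 1`. The two colour classes then have sizes `⌊ℓ/2⌋` and
`⌈ℓ/2⌉`, and every edge except possibly `j` is bichromatic; `j` is bichromatic too when `ℓ` is
even. When `ℓ` is odd we have `ℓ ≥ 3`, so the lost edge weighs `w j ≤ (∑ w) / ℓ ≤ (∑ w) / 3`.
-/

open Finset

theorem Nat.card_filter_range_mod_two_eq_one (n : ℕ) : #{v ∈ range n | v % 2 = 1} = n / 2 := by
  induction n with
  | zero => simp
  | succ n ih =>
    rw [range_add_one, filter_insert]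
    split_ifs with h
    · rw [card_insert_of_notMem (by simp), ih]
      omega
    · rw [ih]
      omega

theorem ZMod.val_add_one {ℓ : ℕ} [NeZero ℓ] (x : ZMod ℓ) : (x + 1).val = (x.val + 1) % ℓ := by
  rw [ZMod.val_add, ZMod.val_one_eq_one_mod, Nat.add_mod_mod]

theorem ZMod.card_filter_val_sub {ℓ : ℕ} [NeZero ℓ] (p : ℕ → Prop) [DecidablePred p]
    (s : ZMod ℓ) : #{i : ZMod ℓ | p (i - s).val} = #{v ∈ range ℓ | p v} := by
  refine card_nbij' (fun i => (i - s).val) (fun v => (v : ZMod ℓ) + s) ?_ ?_ ?_ ?_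
  · intro i hi
    simp_all [ZMod.val_lt]
  · intro v hv
    simp_all [Nat.mod_eq_of_lt]
  · intro i _
    simp
  · intro v hv
    simp_all [Nat.mod_eq_of_lt]

theorem two_thirds_mul_sum_le_sum_erase {ι : Type*} [Fintype ι] [DecidableEq ι] (w : ι → ℝ)
    (hcard : 3 ≤ Fintype.card ι) {j : ι} (hj : ∀ i, w j ≤ w i) (hj₀ : 0 ≤ w j) :
    2 / 3 * ∑ i, w i ≤ ∑ i ∈ univ.erase j, w i := by
  have hmin : (Fintype.card ι : ℝ) * w j ≤ ∑ i, w i := by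
    simpa using card_nsmul_le_sum univ w (w j) fun i _ => hj i
  have hcard' : (3 : ℝ) ≤ Fintype.card ι := by exact_mod_cast hcard
  rw [sum_erase_eq_sub (mem_univ j)]
  nlinarith

def alternatingColoring {ℓ : ℕ} (s : ZMod ℓ) (i : ZMod ℓ) : Bool :=
  (i - s).val % 2 = 1

section alternatingColoring

variable {ℓ : ℕ} [NeZero ℓ]

theorem card_alternatingColoring_eq_true (s : ZMod ℓ) :
    #{i | alternatingColoring s i = true} = ℓ / 2 := by
  simpa [alternatingColoring] using
    (ZMod.card_filter_val_sub (· % 2 = 1) s).trans (Nat.card_filter_range_mod_two_eq_one ℓ)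

theorem card_alternatingColoring_eq_false (s : ZMod ℓ) :
    #{i | alternatingColoring s i = false} = (ℓ + 1) / 2 := by
  have htotal := card_filter_add_card_filter_not
    (s := (univ : Finset (ZMod ℓ))) (fun i => alternatingColoring s i = true)
  simp only [Bool.not_eq_true, card_univ, ZMod.card] at htotal
  rw [card_alternatingColoring_eq_true] at htotal
  omega

theorem alternatingColoring_ne_add_one {s i : ZMod ℓ} (h : i + 1 ≠ s ∨ Even ℓ) :
    alternatingColoring s i ≠ alternatingColoring s (i + 1) := by
  have hval := ZMod.val_add_one (i - s)
  have hlt := (i - s).val_lt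
  rw [show i - s + 1 = i + 1 - s by ring] at hval
  simp only [alternatingColoring, ne_eq, decide_eq_decide, hval]
  rcases (show (i - s).val + 1 ≤ ℓ from hlt).lt_or_eq with hsucc | hsucc
  · rw [Nat.mod_eq_of_lt hsucc]
    omega
  · have hwrap : i + 1 = s := by
      rw [← sub_eq_zero, ← ZMod.val_eq_zero, hval, hsucc, Nat.mod_self]
    obtain ⟨k, hk⟩ := h.resolve_left (not_not.mpr hwrap)
    rw [hsucc, Nat.mod_self]
    omega

end alternatingColoring

theorem stmt10 (ℓ : ℕ) [NeZero ℓ] (hℓ : 2 ≤ ℓ) (w : ZMod ℓ → ℝ) (hw : ∀ i, 0 ≤ w i) :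
    ∃ f : ZMod ℓ → Bool,
      (((Finset.univ.filter fun i => f i = true).card = (ℓ + 1) / 2 ∧
        (Finset.univ.filter fun i => f i = false).card = ℓ / 2) ∨
       ((Finset.univ.filter fun i => f i = true).card = ℓ / 2 ∧
        (Finset.univ.filter fun i => f i = false).card = (ℓ + 1) / 2)) ∧
      (2 / 3 : ℝ) * ∑ i, w i ≤ ∑ i ∈ Finset.univ.filter (fun i => f i ≠ f (i + 1)), w i := by
  obtain ⟨j, -, hj⟩ := exists_min_image univ w univ_nonempty
  set f := alternatingColoring (j + 1)
  refine ⟨f, Or.inr ⟨card_alternatingColoring_eq_true _, card_alternatingColoring_eq_false _⟩, ?_⟩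
  have hbichromatic {i : ZMod ℓ} (h : i ≠ j ∨ Even ℓ) : i ∈ univ.filter fun i => f i ≠ f (i + 1) :=
    mem_filter.mpr ⟨mem_univ i, alternatingColoring_ne_add_one (h.imp_left (by simpa using ·))⟩
  rcases Nat.even_or_odd ℓ with heven | hodd
  · have hall : univ.filter (fun i => f i ≠ f (i + 1)) = univ :=
      eq_univ_of_forall fun i => hbichromatic (Or.inr heven)
    rw [hall]
    linarith [sum_nonneg fun i (_ : i ∈ univ) => hw i]
  · have hℓ₃ : 3 ≤ Fintype.card (ZMod ℓ) := by
      rw [ZMod.card]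
      obtain ⟨k, rfl⟩ := hodd
      omega
    calc 2 / 3 * ∑ i, w i ≤ ∑ i ∈ univ.erase j, w i :=
          two_thirds_mul_sum_le_sum_erase w hℓ₃ (fun i => hj i (mem_univ i)) (hw j)
      _ ≤ _ := sum_le_sum_of_subset_of_nonneg
          (fun i hi => hbichromatic (Or.inl (ne_of_mem_erase hi))) fun i _ _ => hw i
end

section
/- Let k ≥ 1, let V be a finite set, let M be a finite set of ordered pairs (i,j) ∈ V × V with nonnegative weights w(i,j), and let f : V → {1,…,2k+2} be a coloring such that f(i) ≠ f(j) for every (i,j) ∈ M. Then there exists a subset T ⊆ {1,…,2k+2} with |T| = k+1 such that Σ_{(i,j) ∈ M : |T ∩ {f(i), f(j)}| = 1} w(i,j) ≥ ((k+1)/(2k+1))·Σ_{(i,j) ∈ M} w(i,j). -/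
/-!
Average over all `(k + 1)`-subsets `T` of the `2k + 2` colours. A pair with two distinct colours
is split by exactly `2 * (2k choose k)` of the `centralBinom (k + 1)` subsets, which is the
fraction `(k + 1) / (2k + 1)`. Hence the average split weight is `(k + 1) / (2k + 1)` times the
total weight, and some `T` reaches the average.
-/

open Finset

theorem card_filter_powersetCard_mem_notMem {α : Type*} [DecidableEq α] {s : Finset α} {a b : α}
    (ha : a ∈ s) (hb : b ∈ s) (hab : a ≠ b) (m : ℕ) :
    #{T ∈ s.powersetCard (m + 1) | a ∈ T ∧ b ∉ T} = (#s - 2).choose m := by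
  have hcard : #s - 2 = #((s.erase a).erase b) := by
    rw [card_erase_of_mem (mem_erase.2 ⟨hab.symm, hb⟩), card_erase_of_mem ha]; omega
  rw [hcard, ← card_powersetCard]
  refine card_nbij' (·.erase a) (insert a) ?_ ?_ ?_ ?_ <;> intro T hT <;>
    simp only [mem_coe, mem_filter, mem_powersetCard] at hT ⊢
  · grind
  · grind
  · exact insert_erase hT.2.1
  · exact erase_insert fun h => by simpa using hT.1 h

theorem card_filter_powersetCard_separating {α : Type*} [DecidableEq α] {s : Finset α}
    {a b : α} (ha : a ∈ s) (hb : b ∈ s) (hab : a ≠ b) (m : ℕ) :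
    #{T ∈ s.powersetCard (m + 1) | (a ∈ T ∧ b ∉ T) ∨ (a ∉ T ∧ b ∈ T)} =
      2 * (#s - 2).choose m := by
  rw [filter_or, card_union_of_disjoint (disjoint_filter.2 fun _ _ h h' => h'.1 h.1),
    filter_congr (p := fun T => a ∉ T ∧ b ∈ T) fun _ _ => and_comm,
    card_filter_powersetCard_mem_notMem ha hb hab,
    card_filter_powersetCard_mem_notMem hb ha hab.symm, two_mul]

theorem sum_powersetCard_sum_separated {V α R : Type*} [Fintype α] [DecidableEq α]
    [AddCommMonoid R] (M : Finset (V × V)) (w : V × V → R) (f : V → α)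
    (hf : ∀ p ∈ M, f p.1 ≠ f p.2) (m : ℕ) :
    ∑ T ∈ univ.powersetCard (m + 1),
        ∑ p ∈ M with (f p.1 ∈ T ∧ f p.2 ∉ T) ∨ (f p.1 ∉ T ∧ f p.2 ∈ T), w p =
      (2 * (Fintype.card α - 2).choose m) • ∑ p ∈ M, w p := by
  simp_rw [sum_filter]
  rw [sum_comm, smul_sum]
  refine sum_congr rfl fun p hp => ?_
  rw [← sum_filter, sum_const,
    card_filter_powersetCard_separating (mem_univ _) (mem_univ _) (hf p hp), card_univ]

theorem centralBinom_succ_mul_div (n : ℕ) :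
    (Nat.centralBinom (n + 1) : ℝ) * ((n + 1) / (2 * n + 1)) = 2 * Nat.centralBinom n := by
  have h : ((n + 1) * Nat.centralBinom (n + 1) : ℝ) = 2 * (2 * n + 1) * Nat.centralBinom n := by
    exact_mod_cast Nat.succ_mul_centralBinom_succ n
  field_simp
  linear_combination h

theorem stmt12_general {V : Type*} (k : ℕ) (M : Finset (V × V)) (w : V × V → ℝ)
    (f : V → Fin (2 * k + 2))
    (hf : ∀ p ∈ M, f p.1 ≠ f p.2) :
    ∃ T : Finset (Fin (2 * k + 2)), T.card = k + 1 ∧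
      ((k + 1 : ℝ) / (2 * k + 1)) * ∑ p ∈ M, w p ≤
        ∑ p ∈ M.filter (fun p => (f p.1 ∈ T ∧ f p.2 ∉ T) ∨ (f p.1 ∉ T ∧ f p.2 ∈ T)), w p := by
  set S : Finset (Finset (Fin (2 * k + 2))) := univ.powersetCard (k + 1)
  have hS : #S = Nat.centralBinom (k + 1) := by
    rw [card_powersetCard, card_univ, Fintype.card_fin, Nat.centralBinom_eq_two_mul_choose,
      mul_add, mul_one]
  have hsum : ∑ T ∈ S, ((k + 1 : ℝ) / (2 * k + 1)) * ∑ p ∈ M, w p ≤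
      ∑ T ∈ S, ∑ p ∈ M with (f p.1 ∈ T ∧ f p.2 ∉ T) ∨ (f p.1 ∉ T ∧ f p.2 ∈ T), w p := by
    rw [sum_powersetCard_sum_separated M w f hf, sum_const, hS, Fintype.card_fin,
      show 2 * k + 2 - 2 = 2 * k by omega, ← Nat.centralBinom_eq_two_mul_choose, nsmul_eq_mul,
      nsmul_eq_mul, ← mul_assoc, centralBinom_succ_mul_div]
    push_cast
    exact le_rfl
  have hS_nonempty : S.Nonempty :=
    powersetCard_nonempty.2 (by simp only [card_univ, Fintype.card_fin]; omega)
  obtain ⟨T, hT, hle⟩ := exists_le_of_sum_le hS_nonempty hsum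
  exact ⟨T, (mem_powersetCard.1 hT).2, hle⟩

theorem stmt12 {V : Type*} (k : ℕ) (hk : 1 ≤ k) (M : Finset (V × V)) (w : V × V → ℝ)
    (hw : ∀ p ∈ M, 0 ≤ w p) (f : V → Fin (2 * k + 2))
    (hf : ∀ p ∈ M, f p.1 ≠ f p.2) :
    ∃ T : Finset (Fin (2 * k + 2)), T.card = k + 1 ∧
      ((k + 1 : ℝ) / (2 * k + 1)) * ∑ p ∈ M, w p ≤
        ∑ p ∈ M.filter (fun p => (f p.1 ∈ T ∧ f p.2 ∉ T) ∨ (f p.1 ∉ T ∧ f p.2 ∈ T)), w p :=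
  stmt12_general k M w f hf
end
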